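/- Let n ≥ 1 and let λ be a bi-Perron algebraic unit that is a root of some monic palindromic polynomial in ℤ[X] of degree at most 2n. Then y = λ + 1/λ is a real algebraic integer with y > 2, the degree of the minimal polynomial of y over ℚ is at most n, and every Galois conjugate of y has absolute value at most y. -/

import Mathlib

open Polynomial

/-- A bi-Perron algebraic unit: a real algebraic unit `λ > 1` all of whose Galois
conjugates `μ` satisfy `1/λ ≤ |μ| ≤ λ`. -/
def IsBiPerronUnit (l : ℝ) : Prop :=
  1 < l ∧ IsIntegral ℤ l ∧ IsIntegral ℤ l⁻¹ ∧
    ∀ μ ∈ (minpoly ℚ l).aroots ℂ, 1 / l ≤ ‖μ‖ ∧ ‖μ‖ ≤ l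

/-!
Put `y = λ + λ⁻¹`. The roots of a palindromic polynomial `P` are closed under inversion, so
`P` vanishes at `λ` and `λ⁻¹`. If `λ⁻¹` is not a conjugate of `λ`, the minimal polynomials of
`λ` and `λ⁻¹` are distinct factors of `P` of the same degree, so `2 [ℚ(λ) : ℚ] ≤ deg P`.
If it is, an embedding `λ ↦ λ⁻¹` of `ℚ(λ)` fixes `y` but not `λ`, so `λ` is quadratic over
`ℚ(y)` and `[ℚ(λ) : ℚ] = 2 [ℚ(y) : ℚ]`. Either way `2 [ℚ(y) : ℚ] ≤ deg P ≤ 2n`.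
Every conjugate of `y` is `z + z⁻¹` for a conjugate `z` of `λ`, and `t ↦ t + t⁻¹` is largest
at the ends of `[λ⁻¹, λ]`.
-/

theorem Polynomial.aeval_inv_eq_zero_of_reverse_eq {R L : Type*} [CommRing R] [Field L]
    [Algebra R L] {p : R[X]} (hp : p.reverse = p) {x : L} (hx : aeval x p = 0) :
    aeval x⁻¹ p = 0 := by
  rcases eq_or_ne x 0 with rfl | hx0
  · simpa using hx
  · have : Invertible x := invertibleOfNonzero hx0
    rwa [← hp, aeval_def, ← invOf_eq_inv, eval₂_reverse_eq_zero_iff]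

theorem two_lt_add_inv {α : Type*} [Field α] [LinearOrder α] [IsStrictOrderedRing α] {r : α}
    (hr : 1 < r) : 2 < r + r⁻¹ := by
  have hr0 : 0 < r := one_pos.trans hr
  have key : r + r⁻¹ - 2 = (r - 1) ^ 2 / r := by
    field_simp
    ring
  linarith [div_pos (pow_pos (sub_pos.mpr hr) 2) hr0]

theorem norm_add_inv_le_add_inv {𝕜 : Type*} [NormedDivisionRing 𝕜] {z : 𝕜} {r : ℝ}
    (hr : r⁻¹ ≤ ‖z‖) (hz : ‖z‖ ≤ r) : ‖z + z⁻¹‖ ≤ r + r⁻¹ := by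
  rcases eq_or_ne z 0 with rfl | hz0
  · simp only [norm_zero] at hz
    simpa using add_nonneg hz (inv_nonneg.mpr hz)
  have ht : 0 < ‖z‖ := norm_pos_iff.mpr hz0
  have key : r + r⁻¹ - (‖z‖ + ‖z‖⁻¹) = (r - ‖z‖) * (‖z‖ - r⁻¹) / ‖z‖ := by
    have : r ≠ 0 := (ht.trans_le hz).ne'
    field_simp
    ring
  calc ‖z + z⁻¹‖ ≤ ‖z‖ + ‖z‖⁻¹ := norm_inv z ▸ norm_add_le z z⁻¹
    _ ≤ r + r⁻¹ := by
      rw [← sub_nonneg, key]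
      exact div_nonneg (mul_nonneg (sub_nonneg.mpr hz) (sub_nonneg.mpr hr)) ht.le

section

open IntermediateField

variable {K L : Type*} [Field K] [Field L] [Algebra K L]

theorem add_inv_mem_adjoin_simple (x : L) : x + x⁻¹ ∈ K⟮x⟯ :=
  add_mem (mem_adjoin_simple_self K x) (inv_mem (mem_adjoin_simple_self K x))

theorem natDegree_minpoly_le_of_mem_adjoin_simple {x y : L} (hx : IsIntegral K x)
    (hy : y ∈ K⟮x⟯) : (minpoly K y).natDegree ≤ (minpoly K x).natDegree := by
  have := adjoin.finiteDimensional hx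
  rw [← adjoin.finrank hx, ← IntermediateField.minpoly_eq ⟨y, hy⟩]
  exact minpoly.natDegree_le _

theorem natDegree_minpoly_add_natDegree_minpoly_le {a b : L} (ha : IsIntegral K a)
    (hb : IsIntegral K b) (hab : aeval b (minpoly K a) ≠ 0) {P : K[X]} (hP : P ≠ 0)
    (hPa : aeval a P = 0) (hPb : aeval b P = 0) :
    (minpoly K a).natDegree + (minpoly K b).natDegree ≤ P.natDegree := by
  have hcop : IsCoprime (minpoly K a) (minpoly K b) := by
    refine (minpoly.irreducible ha).coprime_iff_not_dvd.mpr fun hdvd ↦ hab ?_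
    exact aeval_eq_zero_of_dvd_aeval_eq_zero
      ((minpoly.irreducible ha).dvd_symm (minpoly.irreducible hb) hdvd) (minpoly.aeval K b)
  rw [← natDegree_mul (minpoly.ne_zero ha) (minpoly.ne_zero hb)]
  exact natDegree_le_of_dvd (hcop.mul_dvd (minpoly.dvd K a hPa) (minpoly.dvd K b hPb)) hP

theorem notMem_adjoin_add_inv {x : L} (hx : IsIntegral K x)
    (hconj : aeval x⁻¹ (minpoly K x) = 0) (hne : x ≠ x⁻¹) : x ∉ K⟮x + x⁻¹⟯ := by
  intro hmem
  have hroot : x⁻¹ ∈ (minpoly K x).aroots L := mem_aroots.mpr ⟨minpoly.ne_zero hx, hconj⟩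
  set σ : K⟮x⟯ →ₐ[K] L := (algHomAdjoinIntegralEquiv K hx).symm ⟨x⁻¹, hroot⟩
  have hσ : σ (AdjoinSimple.gen K x) = x⁻¹ :=
    algHomAdjoinIntegralEquiv_symm_apply_gen K hx ⟨x⁻¹, hroot⟩
  have hle : K⟮x + x⁻¹⟯ ≤ K⟮x⟯ := adjoin_simple_le_iff.mpr (add_inv_mem_adjoin_simple x)
  have hfix : σ.comp (inclusion hle) = (K⟮x + x⁻¹⟯).val := by
    refine adjoin_algHom_ext K fun y hy ↦ ?_
    obtain rfl := Set.mem_singleton_iff.mp hy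
    have hgen : inclusion hle ⟨x + x⁻¹, subset_adjoin K _ hy⟩ =
        AdjoinSimple.gen K x + (AdjoinSimple.gen K x)⁻¹ := Subtype.ext (by simp)
    rw [AlgHom.comp_apply, hgen, map_add, map_inv₀, hσ, inv_inv, add_comm]
    rfl
  have hx' := DFunLike.congr_fun hfix ⟨x, hmem⟩
  rw [AlgHom.comp_apply, show inclusion hle ⟨x, hmem⟩ = AdjoinSimple.gen K x from rfl, hσ] at hx'
  exact hne hx'.symm

theorem natDegree_minpoly_eq_two_mul_of_notMem_adjoin_add_inv {x : L} (hx : IsIntegral K x)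
    (hnot : x ∉ K⟮x + x⁻¹⟯) :
    (minpoly K x).natDegree = 2 * (minpoly K (x + x⁻¹)).natDegree := by
  set E := K⟮x + x⁻¹⟯
  have hxE : IsIntegral E x := hx.tower_top
  have hle : E ≤ K⟮x⟯ := adjoin_simple_le_iff.mpr (add_inv_mem_adjoin_simple x)
  have hx0 : x ≠ 0 := fun h ↦ hnot (h ▸ zero_mem E)
  set q : E[X] := X ^ 2 - C (AdjoinSimple.gen K (x + x⁻¹)) * X + 1
  have hq : aeval x q = 0 := by
    simp only [q, map_add, map_sub, map_mul, map_pow, aeval_X, aeval_C, map_one]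
    change x ^ 2 - (x + x⁻¹) * x + 1 = 0
    field_simp
    ring
  have hq2 : q.natDegree = 2 := by simp only [q]; compute_degree!
  have hdeg : (minpoly E x).natDegree = 2 := by
    refine le_antisymm ?_ ((minpoly.two_le_natDegree_iff hxE).mpr ?_)
    · exact hq2 ▸ natDegree_le_of_dvd (minpoly.dvd E x hq) (by rintro h; simp [h] at hq2)
    · rintro ⟨y, hy⟩
      exact hnot (hy ▸ y.2)
  have htop : (E⟮x⟯).restrictScalars K = K⟮x⟯ :=
    (restrictScalars_adjoin_eq_sup K E {x}).trans (sup_eq_right.mpr hle)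
  have htower := Module.finrank_mul_finrank K E E⟮x⟯
  have hKEx : Module.finrank K E⟮x⟯ = Module.finrank K K⟮x⟯ := by rw [← htop]; rfl
  rw [adjoin.finrank hxE, hdeg, hKEx, adjoin.finrank hx, adjoin.finrank (hx.add hx.inv)] at htower
  omega

theorem two_mul_natDegree_minpoly_add_inv_le {x : L} (hne : x ≠ x⁻¹) {P : K[X]} (hP : P ≠ 0)
    (hx : aeval x P = 0) (hxinv : aeval x⁻¹ P = 0) :
    2 * (minpoly K (x + x⁻¹)).natDegree ≤ P.natDegree := by
  have hxint : IsIntegral K x := IsAlgebraic.isIntegral ⟨P, hP, hx⟩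
  by_cases hconj : aeval x⁻¹ (minpoly K x) = 0
  · rw [← natDegree_minpoly_eq_two_mul_of_notMem_adjoin_add_inv hxint
      (notMem_adjoin_add_inv hxint hconj hne)]
    exact natDegree_le_of_dvd (minpoly.dvd K x hx) hP
  · have hsum := natDegree_minpoly_add_natDegree_minpoly_le hxint hxint.inv hconj hP hx hxinv
    have hy : (minpoly K (x + x⁻¹)).natDegree ≤ (minpoly K x).natDegree :=
      natDegree_minpoly_le_of_mem_adjoin_simple hxint (add_inv_mem_adjoin_simple x)
    have hinv : (minpoly K x).natDegree ≤ (minpoly K x⁻¹).natDegree :=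
      natDegree_minpoly_le_of_mem_adjoin_simple hxint.inv <| by
        simpa using inv_mem (mem_adjoin_simple_self K x⁻¹)
    omega

theorem exists_mem_aroots_minpoly_eq_add_inv {M : Type*} [Field M] [Algebra K M]
    [IsAlgClosed M] {x : L} (hx : IsIntegral K x) {μ : M}
    (hμ : μ ∈ (minpoly K (x + x⁻¹)).aroots M) :
    ∃ z ∈ (minpoly K x).aroots M, μ = z + z⁻¹ := by
  have := adjoin.finiteDimensional hx
  set u := AdjoinSimple.gen K x
  have hmin : minpoly K (u + u⁻¹) = minpoly K (x + x⁻¹) := IntermediateField.minpoly_eq _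
  have hroot : μ ∈ (minpoly K (u + u⁻¹)).rootSet M := by
    rw [hmin, mem_rootSet]
    exact mem_aroots.mp hμ
  obtain ⟨ψ, rfl⟩ := ((Algebra.IsAlgebraic.of_finite K K⟮x⟯).range_eval_eq_rootSet_minpoly
    M (u + u⁻¹)).symm.subset hroot
  refine ⟨ψ u, mem_aroots.mpr ⟨minpoly.ne_zero hx, ?_⟩, ?_⟩
  · rw [← minpoly_gen K x, aeval_algHom_apply, minpoly.aeval, map_zero]
  · simp only [map_add, map_inv₀]

end

theorem trace_of_biPerron_general (n : ℕ) (l : ℝ) (hl : IsBiPerronUnit l)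
    (hpal : ∃ p : Polynomial ℤ, p.Monic ∧ p.reverse = p ∧ p.natDegree ≤ 2 * n ∧
      Polynomial.aeval l p = 0) :
    IsIntegral ℤ (l + 1 / l) ∧
    2 < l + 1 / l ∧
    (minpoly ℚ (l + 1 / l)).natDegree ≤ n ∧
    ∀ μ ∈ (minpoly ℚ (l + 1 / l)).aroots ℂ, ‖μ‖ ≤ l + 1 / l := by
  obtain ⟨hl1, hlint, hlinvint, hconj⟩ := hl
  obtain ⟨p, hpm, hprev, hpdeg, hpl⟩ := hpal
  simp only [one_div] at hconj ⊢
  refine ⟨hlint.add hlinvint, two_lt_add_inv hl1, ?_, fun μ hμ ↦ ?_⟩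
  · have hne : l ≠ l⁻¹ := ((inv_lt_one_of_one_lt₀ hl1).trans hl1).ne'
    have := two_mul_natDegree_minpoly_add_inv_le hne (hpm.map (algebraMap ℤ ℚ)).ne_zero
      (by rwa [aeval_map_algebraMap])
      (by rw [aeval_map_algebraMap]; exact aeval_inv_eq_zero_of_reverse_eq hprev hpl)
    rw [hpm.natDegree_map] at this
    omega
  · obtain ⟨z, hz, rfl⟩ := exists_mem_aroots_minpoly_eq_add_inv hlint.tower_top hμ
    exact norm_add_inv_le_add_inv (hconj z hz).1 (hconj z hz).2

/-- If `λ` is a bi-Perron algebraic unit which is a root of a monic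
palindromic integer polynomial of degree at most `2n`, then `y = λ + 1/λ` is a real algebraic
integer with `y > 2`, the minimal polynomial of `y` over `ℚ` has degree at most `n`, and every
Galois conjugate of `y` has absolute value at most `y`. -/
theorem trace_of_biPerron (n : ℕ) (hn : 1 ≤ n) (l : ℝ) (hl : IsBiPerronUnit l)
    (hpal : ∃ p : Polynomial ℤ, p.Monic ∧ p.reverse = p ∧ p.natDegree ≤ 2 * n ∧
      Polynomial.aeval l p = 0) :
    IsIntegral ℤ (l + 1 / l) ∧
    2 < l + 1 / l ∧
    (minpoly ℚ (l + 1 / l)).natDegree ≤ n ∧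
    ∀ μ ∈ (minpoly ℚ (l + 1 / l)).aroots ℂ, ‖μ‖ ≤ l + 1 / l :=
  trace_of_biPerron_general n l hl hpal
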